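/- In R = C[X,Y,Z,U,V,W,T] with the ideal I generated by V − XZ + X²U + Y, T − Z² + ZXU + YU, and W + XU − Z, the monomials not divisible by any of W², ZUV, ZW, XT, XU, XW form a C-vector-space basis of the quotient R/I. -/

import Mathlib

/-!
Solving the three generators of `I` for `W`, `V` and `T` identifies `ℂ[X,Y,Z,U,V,W,T]/I` with the
polynomial ring `ℂ[X,Z,Y,U]`, via `W ↦ Z - XU`, `V ↦ XZ - X²U - Y`, `T ↦ Z² - XZU - YU`. Under this
identification the monomial `X^a Z^b Y^c W^w V^v U^u T^t` becomes a polynomial whose lex leading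
exponent (for `X > Z > Y > U`) is `(a + w + 2v + t, b + t, c, w + v + u + t)`. The admissible
exponents are those supported on one of the faces `{w = u = t = 0}`, `{a = w = v = 0}`,
`{a = w = u = 0}`, `{a = b = 0, w ≤ 1}`, and on them this weight map is a bijection onto `ℕ⁴`.
Polynomials whose leading exponents run bijectively over all monomials form a basis, by
triangularity.
-/

open MvPolynomial

namespace Stmt5

/-- Variables of `ℂ[X,Y,Z,U,V,W,T]`: `X = 0`, `Z = 1`, `Y = 2`, `W = 3`,
`V = 4`, `U = 5`, `T = 6`. -/
noncomputable def X : MvPolynomial (Fin 7) ℂ := MvPolynomial.X 0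
noncomputable def Z : MvPolynomial (Fin 7) ℂ := MvPolynomial.X 1
noncomputable def Y : MvPolynomial (Fin 7) ℂ := MvPolynomial.X 2
noncomputable def W : MvPolynomial (Fin 7) ℂ := MvPolynomial.X 3
noncomputable def V : MvPolynomial (Fin 7) ℂ := MvPolynomial.X 4
noncomputable def U : MvPolynomial (Fin 7) ℂ := MvPolynomial.X 5
noncomputable def T : MvPolynomial (Fin 7) ℂ := MvPolynomial.X 6

/-- The reduced Plücker ideal for `C₂ = sp(4)`. -/
noncomputable def I : Ideal (MvPolynomial (Fin 7) ℂ) :=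
  Ideal.span {V - X * Z + X ^ 2 * U + Y, T - Z ^ 2 + Z * X * U + Y * U,
    W + X * U - Z}

/-- The exponent vectors of the six leading monomials
`W², ZUV, ZW, XT, XU, XW`. -/
noncomputable def leadMonos : List (Fin 7 →₀ ℕ) :=
  [Finsupp.single 3 2,
   Finsupp.single 1 1 + Finsupp.single 5 1 + Finsupp.single 4 1,
   Finsupp.single 1 1 + Finsupp.single 3 1,
   Finsupp.single 0 1 + Finsupp.single 6 1,
   Finsupp.single 0 1 + Finsupp.single 5 1,
   Finsupp.single 0 1 + Finsupp.single 3 1]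

/-- A monomial `m` is admissible if it is divisible by none of
`W², ZUV, ZW, XT, XU, XW`. -/
def Admissible (m : Fin 7 →₀ ℕ) : Prop := ∀ e ∈ leadMonos, ¬ e ≤ m

end Stmt5

namespace MonomialOrder

variable {σ : Type*} (m : MonomialOrder σ)

theorem degree_sub_eq_right_of_lt {R : Type*} [CommRing R] {f g : MvPolynomial σ R}
    (h : m.degree f ≺[m] m.degree g) : m.degree (f - g) = m.degree g := by
  rw [sub_eq_add_neg, degree_add_eq_right_of_lt (by rwa [degree_neg]), degree_neg]

theorem degree_sub_sub_eq_of_lt {R : Type*} [CommRing R] {f g h : MvPolynomial σ R}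
    (hf : m.degree f ≺[m] m.degree g) (hh : m.degree h ≺[m] m.degree g) :
    m.degree (f - g - h) = m.degree g := by
  rw [degree_sub_of_lt, m.degree_sub_eq_right_of_lt hf]
  rwa [m.degree_sub_eq_right_of_lt hf]

theorem lex_lt_of_apply_bot_lt {τ : Type*} [LinearOrder τ] [WellFoundedGT τ] [OrderBot τ]
    {a b : τ →₀ ℕ} (h : a ⊥ < b ⊥) : a ≺[lex] b :=
  Finsupp.Lex.lt_iff.2 ⟨⊥, fun _ hj => absurd hj not_lt_bot, h⟩

theorem degree_aeval_monomial_one {τ R : Type*} [CommSemiring R] [NoZeroDivisors R]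
    {g : τ → MvPolynomial σ R} (hg : ∀ i, g i ≠ 0) (d : τ →₀ ℕ) :
    m.degree (aeval g (monomial d (1 : R))) = d.sum fun i k => k • m.degree (g i) := by
  rw [aeval_monomial, map_one, one_mul, Finsupp.prod,
    m.degree_prod fun i _ => pow_ne_zero _ (hg i)]
  simp only [degree_pow]
  rfl

section Field

variable {ι K : Type*} [Field K] {f : ι → MvPolynomial σ K}

theorem linearIndependent_of_injective_degree (hf : ∀ i, f i ≠ 0)
    (hinj : (m.degree ∘ f).Injective) : LinearIndependent K f := by
  classical
  rw [linearIndependent_iff']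
  intro s c hsum i hi
  by_contra hci
  obtain ⟨j, hj, hmax⟩ := (s.filter (c · ≠ 0)).exists_max_image (m.toSyn ∘ m.degree ∘ f)
    ⟨i, Finset.mem_filter.2 ⟨hi, hci⟩⟩
  rw [Finset.mem_filter] at hj
  -- the term of largest degree is the only one contributing to the coefficient at that degree
  have hcoeff : (∑ k ∈ s, c k • f k).coeff (m.degree (f j)) = c j * m.leadingCoeff (f j) := by
    rw [coeff_sum, Finset.sum_eq_single j _ (fun h => absurd hj.1 h)]
    · rfl
    intro k hk hkj
    by_cases hck : c k = 0
    · simp [hck]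
    have hlt : m.degree (f k) ≺[m] m.degree (f j) :=
      (hmax k (Finset.mem_filter.2 ⟨hk, hck⟩)).lt_of_ne
        (fun h => hkj (hinj (m.toSyn.injective h)))
    rw [coeff_smul, m.coeff_eq_zero_of_lt hlt, smul_zero]
  rw [hsum, coeff_zero] at hcoeff
  exact mul_ne_zero hj.2 (m.leadingCoeff_ne_zero_iff.2 (hf j)) hcoeff.symm

theorem span_eq_top_of_surjective_degree (hf : ∀ i, f i ≠ 0)
    (hsurj : (m.degree ∘ f).Surjective) : Submodule.span K (Set.range f) = ⊤ := by
  suffices ∀ p, p ∈ Submodule.span K (Set.range f) from eq_top_iff.2 fun p _ => this p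
  intro p
  induction hd : m.toSyn (m.degree p) using WellFoundedLT.induction generalizing p with
  | ind d ih =>
    obtain ⟨i, hi⟩ := hsurj (m.degree p)
    have hunit : IsUnit (m.leadingCoeff (f i)) := (m.leadingCoeff_ne_zero_iff.2 (hf i)).isUnit
    have hfi : f i ∈ Submodule.span K (Set.range f) := Submodule.subset_span ⟨i, rfl⟩
    by_cases hp : m.degree p = 0
    · have hpC := m.eq_C_of_degree_eq_zero hp
      have hfC := m.eq_C_of_degree_eq_zero (hi.trans hp)
      rw [hpC, ← div_mul_cancel₀ (m.leadingCoeff p) hunit.ne_zero, C_mul, ← hfC, ← smul_eq_C_mul]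
      exact Submodule.smul_mem _ _ hfi
    have hred : p = m.reduce hunit p + (hunit.unit⁻¹ * m.leadingCoeff p) • f i := by
      rw [reduce, ← hi, Function.comp_apply, tsub_self, monomial_zero', smul_eq_C_mul,
        sub_add_cancel]
    rw [hred]
    refine add_mem (ih _ ?_ _ rfl) (Submodule.smul_mem _ _ hfi)
    rw [← hd]
    exact m.degree_reduce_lt hunit hi.le hp

noncomputable def basisOfBijectiveDegree (hf : ∀ i, f i ≠ 0) (hbij : (m.degree ∘ f).Bijective) :
    Module.Basis ι K (MvPolynomial σ K) :=
  Module.Basis.mk (m.linearIndependent_of_injective_degree hf hbij.1)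
    (m.span_eq_top_of_surjective_degree hf hbij.2).ge

theorem coe_basisOfBijectiveDegree (hf : ∀ i, f i ≠ 0) (hbij : (m.degree ∘ f).Bijective) :
    ⇑(m.basisOfBijectiveDegree hf hbij) = f :=
  Module.Basis.coe_mk _ _

end Field

end MonomialOrder

namespace Stmt5

open MonomialOrder

/-- The variables `0, 1, 2, 3` of the target ring stand for `X, Z, Y, U`; the entries `3, 4, 6`
are `W, V, T` solved from the generators of `I`. -/
noncomputable def elimVars : Fin 7 → MvPolynomial (Fin 4) ℂ :=
  ![.X 0, .X 1, .X 2, .X 1 - .X 0 * .X 3, .X 0 * .X 1 - .X 0 ^ 2 * .X 3 - .X 2, .X 3,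
    .X 1 ^ 2 - .X 1 * .X 0 * .X 3 - .X 2 * .X 3]

noncomputable def elim : MvPolynomial (Fin 7) ℂ →ₐ[ℂ] MvPolynomial (Fin 4) ℂ := aeval elimVars

noncomputable def incl : MvPolynomial (Fin 4) ℂ →ₐ[ℂ] MvPolynomial (Fin 7) ℂ :=
  aeval ![X, Z, Y, U]

theorem I_le_ker_elim : I ≤ RingHom.ker elim := by
  rw [I, Ideal.span_le]
  rintro p (rfl | rfl | rfl) <;> simp [elim, elimVars, X, Y, Z, W, V, U, T] <;> ring

theorem elim_comp_incl : elim.comp incl = AlgHom.id ℂ _ := by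
  ext i : 1
  fin_cases i <;> simp [elim, incl, elimVars, X, Y, Z, U]

theorem mk_incl_elim (p : MvPolynomial (Fin 7) ℂ) :
    Ideal.Quotient.mk I (incl (elim p)) = Ideal.Quotient.mk I p := by
  have hV : Ideal.Quotient.mk I (V - X * Z + X ^ 2 * U + Y) = 0 :=
    Ideal.Quotient.eq_zero_iff_mem.2 (Ideal.subset_span (by simp))
  have hT : Ideal.Quotient.mk I (T - Z ^ 2 + Z * X * U + Y * U) = 0 :=
    Ideal.Quotient.eq_zero_iff_mem.2 (Ideal.subset_span (by simp))
  have hW : Ideal.Quotient.mk I (W + X * U - Z) = 0 :=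
    Ideal.Quotient.eq_zero_iff_mem.2 (Ideal.subset_span (by simp))
  simp only [map_add, map_sub, map_mul, map_pow, X, Y, Z, W, V, U, T] at hV hT hW
  suffices (Ideal.Quotient.mkₐ ℂ I).comp (incl.comp elim) = Ideal.Quotient.mkₐ ℂ I from
    congr($this p)
  ext i : 1
  fin_cases i <;> simp [elim, incl, elimVars, X, Y, Z, U]
  · linear_combination -hW
  · linear_combination -hV
  · linear_combination -hT

noncomputable def quotientEquiv : (MvPolynomial (Fin 7) ℂ ⧸ I) ≃ₐ[ℂ] MvPolynomial (Fin 4) ℂ :=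
  AlgEquiv.ofAlgHom (Ideal.Quotient.liftₐ I elim I_le_ker_elim)
    ((Ideal.Quotient.mkₐ ℂ I).comp incl)
    (AlgHom.ext fun p => congr($elim_comp_incl p))
    (Ideal.Quotient.algHom_ext ℂ (AlgHom.ext mk_incl_elim))

theorem quotientEquiv_mk (p : MvPolynomial (Fin 7) ℂ) :
    quotientEquiv (Ideal.Quotient.mk I p) = elim p :=
  rfl

noncomputable def leadExp : Fin 7 → Fin 4 →₀ ℕ :=
  ![.single 0 1, .single 1 1, .single 2 1, .single 0 1 + .single 3 1, .single 0 2 + .single 3 1,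
    .single 3 1, .single 0 1 + .single 1 1 + .single 3 1]

theorem degree_elimVars (i : Fin 7) : lex.degree (elimVars i) = leadExp i := by
  match i with
  | 0 | 1 | 2 | 5 => simp [elimVars, leadExp, degree_X]
  | 3 =>
    simp only [elimVars, Matrix.cons_val]
    rw [lex.degree_sub_eq_right_of_lt
      (lex_lt_of_apply_bot_lt (by simp [_root_.bot_eq_zero, degree_X, degree_mul]))]
    simp [leadExp, degree_X, degree_mul]
  | 4 | 6 =>
    simp only [elimVars, Matrix.cons_val]
    rw [lex.degree_sub_sub_eq_of_lt
      (lex_lt_of_apply_bot_lt (by simp [_root_.bot_eq_zero, degree_X, degree_mul, degree_pow]))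
      (lex_lt_of_apply_bot_lt (by simp [_root_.bot_eq_zero, degree_X, degree_mul, degree_pow]))]
    simp [leadExp, degree_X, degree_mul, degree_pow, add_comm]

theorem elimVars_ne_zero (i : Fin 7) : elimVars i ≠ 0 :=
  lex.ne_zero_of_degree_ne_zero (by rw [degree_elimVars]; fin_cases i <;> simp [leadExp])

noncomputable def weight (d : Fin 7 →₀ ℕ) : Fin 4 →₀ ℕ := d.sum fun i k => k • leadExp i

theorem degree_elim_monomial (d : Fin 7 →₀ ℕ) :
    lex.degree (elim (monomial d (1 : ℂ))) = weight d := by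
  rw [elim, lex.degree_aeval_monomial_one elimVars_ne_zero]
  simp only [degree_elimVars, weight]

theorem elim_monomial_ne_zero (d : Fin 7 →₀ ℕ) : elim (monomial d (1 : ℂ)) ≠ 0 := by
  rw [elim, aeval_monomial, map_one, one_mul]
  exact Finset.prod_ne_zero_iff.2 fun i _ => pow_ne_zero _ (elimVars_ne_zero i)

theorem weight_apply (d : Fin 7 →₀ ℕ) :
    weight d 0 = d 0 + d 3 + 2 * d 4 + d 6 ∧ weight d 1 = d 1 + d 6 ∧ weight d 2 = d 2 ∧
      weight d 3 = d 3 + d 4 + d 5 + d 6 := by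
  simp [weight, Finsupp.sum_fintype, Fin.sum_univ_seven, leadExp]
  omega

theorem admissible_iff (d : Fin 7 →₀ ℕ) : Admissible d ↔
    d 3 = 0 ∧ d 5 = 0 ∧ d 6 = 0 ∨ d 0 = 0 ∧ d 3 = 0 ∧ d 4 = 0 ∨
      d 0 = 0 ∧ d 3 = 0 ∧ d 5 = 0 ∨ d 0 = 0 ∧ d 1 = 0 ∧ d 3 ≤ 1 := by
  simp [Admissible, leadMonos, Finsupp.le_def, Fin.forall_fin_succ]
  omega

/-- Its four branches land on the four faces of `admissible_iff`, in that order. -/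
noncomputable def standardExp (n : Fin 4 →₀ ℕ) : Fin 7 →₀ ℕ :=
  Finsupp.equivFunOnFinite.symm <|
    if 2 * n 3 ≤ n 0 then ![n 0 - 2 * n 3, n 1, n 2, 0, n 3, 0, 0]
    else if n 0 ≤ n 1 ∧ n 0 ≤ n 3 then ![0, n 1 - n 0, n 2, 0, 0, n 3 - n 0, n 0]
    else if n 3 ≤ n 0 ∧ 2 * n 3 ≤ n 0 + n 1 then
      ![0, n 0 + n 1 - 2 * n 3, n 2, 0, n 0 - n 3, 0, 2 * n 3 - n 0]
    else ![0, 0, n 2, (n 0 - n 1) % 2, (n 0 - n 1) / 2,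
      n 3 - n 1 - (n 0 - n 1) % 2 - (n 0 - n 1) / 2, n 1]

theorem admissible_standardExp (n : Fin 4 →₀ ℕ) : Admissible (standardExp n) := by
  rw [admissible_iff, standardExp]
  split_ifs <;> simp <;> omega

theorem weight_standardExp (n : Fin 4 →₀ ℕ) : weight (standardExp n) = n := by
  obtain ⟨h0, h1, h2, h3⟩ := weight_apply (standardExp n)
  ext j
  fin_cases j <;> simp only [Fin.zero_eta, Fin.mk_one, Fin.reduceFinMk, h0, h1, h2, h3] <;>
    simp only [standardExp] <;> split_ifs <;> simp <;> omega

theorem standardExp_weight {d : Fin 7 →₀ ℕ} (hd : Admissible d) : standardExp (weight d) = d := by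
  obtain ⟨h0, h1, h2, h3⟩ := weight_apply d
  have hd_eq : d = Finsupp.equivFunOnFinite.symm ![d 0, d 1, d 2, d 3, d 4, d 5, d 6] := by
    ext i; fin_cases i <;> rfl
  conv_rhs => rw [hd_eq]
  rw [standardExp, h0, h1, h2, h3, Equiv.apply_eq_iff_eq]
  rw [admissible_iff] at hd
  rcases hd with ⟨hw, hu, ht⟩ | ⟨ha, hw, hv⟩ | ⟨ha, hw, hu⟩ | ⟨ha, hb, hw⟩ <;>
    split_ifs <;> simp only [Matrix.vecCons_inj, and_true, true_and] <;> omega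

theorem bijective_weight : Function.Bijective fun d : {d // Admissible d} => weight d :=
  ⟨fun d d' h => Subtype.ext <| by
      rw [← standardExp_weight d.2, ← standardExp_weight d'.2]; exact congrArg standardExp h,
    fun n => ⟨⟨standardExp n, admissible_standardExp n⟩, weight_standardExp n⟩⟩

theorem monomial_basis_of_quotient :
    LinearIndependent ℂ
      (fun m : {m : Fin 7 →₀ ℕ // Admissible m} =>
        Ideal.Quotient.mk I (monomial m.1 (1 : ℂ))) ∧
    Submodule.span ℂ
      (Set.range (fun m : {m : Fin 7 →₀ ℕ // Admissible m} =>
        Ideal.Quotient.mk I (monomial m.1 (1 : ℂ)))) = ⊤ := by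
  let G := fun d : {d // Admissible d} => elim (monomial d.1 (1 : ℂ))
  have hbij : (lex.degree ∘ G).Bijective := by
    convert bijective_weight using 1
    exact funext fun d => degree_elim_monomial d.1
  let b := (lex.basisOfBijectiveDegree (f := G) (fun d => elim_monomial_ne_zero d.1) hbij).map
    quotientEquiv.symm.toLinearEquiv
  have hb : ⇑b = fun d => Ideal.Quotient.mk I (monomial d.1 (1 : ℂ)) := by
    ext d : 1
    rw [Module.Basis.map_apply, coe_basisOfBijectiveDegree, AlgEquiv.toLinearEquiv_apply,
      AlgEquiv.symm_apply_eq, quotientEquiv_mk]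
  exact hb ▸ ⟨b.linearIndependent, b.span_eq⟩

end Stmt5
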